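/- arXiv:1204.4743 — 5 statements merged into one kernel-verified Lean document; each statement's English description precedes it below -/
import Mathlib

section
/- For all ordinals ζ ≤ ξ, one has −ζ + ξ = −CNP(ζ, ξ) + ξ; that is, subtracting ζ from ξ on the left gives the same result as subtracting the largest partial sum of the Cantor normal form of ξ that does not exceed ζ. -/
open Ordinal

/-- `CNA ξ` is the set of partial sums of the Cantor normal form of `ξ`:
if `ξ = ω^{ξ_1} + … + ω^{ξ_N}` with `ξ_1 ≥ … ≥ ξ_N`, then `CNA ξ` consists of
the sums `ω^{ξ_1} + … + ω^{ξ_k}` for `0 ≤ k ≤ N` (including the empty sum `0`).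
Since the weakly decreasing representation is unique, we may describe this as:
`η ∈ CNA ξ` iff there are lists of exponents `l₁, l₂` with `l₁ ++ l₂` weakly
decreasing, `ξ` the sum of the `ω`-powers of `l₁ ++ l₂`, and `η` that of `l₁`. -/
def CNA (ξ : Ordinal) : Set Ordinal :=
  { η | ∃ l₁ l₂ : List Ordinal, (l₁ ++ l₂).Chain' (· ≥ ·) ∧
      ξ = ((l₁ ++ l₂).map fun e => ω ^ e).sum ∧
      η = (l₁.map fun e => ω ^ e).sum }

/-- `CNP ζ ξ` is the Cantor normal form projection of `ζ` on `ξ`: the largest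
element of `CNA ξ` that does not exceed `ζ`. -/
noncomputable def CNP (ζ ξ : Ordinal) : Ordinal :=
  sSup { η | η ∈ CNA ξ ∧ η ≤ ζ }

/-! Writing `ξ ≠ 0` as `ω ^ log ω ξ + (ξ - ω ^ log ω ξ)`, the partial sums of `ξ` are `0` and
`ω ^ log ω ξ` plus the partial sums of the strictly smaller ordinal `ξ - ω ^ log ω ξ`. By induction,
the partial sum below `ζ` is `0` when `ζ < ω ^ log ω ξ`, and then `ζ + ξ = ξ` gives `ξ - ζ = ξ`;
otherwise both `ζ` and its projection begin with `ω ^ log ω ξ`, which `ξ - (a + b) = ξ - a - b`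
strips off. -/

theorem sum_map_opow_lt_opow_succ {a : Ordinal} :
    ∀ {l : List Ordinal}, (∀ x ∈ l, x ≤ a) → (l.map (ω ^ ·)).sum < ω ^ Order.succ a
  | [], _ => by simpa using opow_pos (Order.succ a) omega0_pos
  | x :: t, h => by
      simp only [List.map_cons, List.sum_cons]
      exact isPrincipal_add_omega0_opow _
        ((opow_lt_opow_iff_right one_lt_omega0).2 ((h x (by simp)).trans_lt (Order.lt_succ a)))
        (sum_map_opow_lt_opow_succ fun y hy => h y (by simp [hy]))

theorem log_sum_map_opow_cons {x : Ordinal} {t : List Ordinal}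
    (hc : (x :: t).IsChain (· ≥ ·)) : log ω ((x :: t).map (ω ^ ·)).sum = x := by
  have hle : ω ^ x ≤ ((x :: t).map (ω ^ ·)).sum := by simp
  have hne : ((x :: t).map (ω ^ ·)).sum ≠ 0 := ((opow_pos x omega0_pos).trans_le hle).ne'
  have hlt := sum_map_opow_lt_opow_succ (a := x) fun y hy =>
    (List.mem_cons.1 hy).elim (fun h => h.le) (List.rel_of_pairwise_cons
      (List.isChain_iff_pairwise.1 hc))
  refine le_antisymm ?_ ((opow_le_iff_le_log one_lt_omega0 hne).1 hle)
  exact Order.lt_succ_iff.1 ((lt_opow_iff_log_lt one_lt_omega0 hne).1 hlt)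

theorem sub_opow_log_lt_self {ξ : Ordinal} (hξ : ξ ≠ 0) : ξ - ω ^ log ω ξ < ξ := by
  refine (sub_lt_of_le (opow_log_le_self ω hξ)).2 (lt_of_le_of_ne le_add_self fun h => ?_)
  have hmul : ω ^ log ω ξ * ω ≤ ξ := add_eq_right_iff_mul_omega0_le.1 h.symm
  rw [← opow_succ] at hmul
  exact hmul.not_gt (lt_opow_succ_log_self one_lt_omega0 ξ)

theorem chain_log_cons {ξ : Ordinal} {l : List Ordinal} (hl : l.IsChain (· ≥ ·))
    (hs : (l.map (ω ^ ·)).sum = ξ - ω ^ log ω ξ) : (log ω ξ :: l).IsChain (· ≥ ·) := by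
  cases l with
  | nil => exact List.isChain_singleton _
  | cons a t =>
    refine List.isChain_cons_cons.2 ⟨?_, hl⟩
    rw [← log_sum_map_opow_cons hl, hs]
    exact log_mono_right ω (Ordinal.sub_le.2 le_add_self)

theorem exists_chain_sum_map_opow_eq (ξ : Ordinal) :
    ∃ l : List Ordinal, l.IsChain (· ≥ ·) ∧ ξ = (l.map (ω ^ ·)).sum := by
  induction ξ using WellFoundedLT.induction with
  | ind ξ IH =>
  rcases eq_or_ne ξ 0 with rfl | hξ
  · exact ⟨[], List.isChain_nil, by simp⟩
  obtain ⟨l, hl, hs⟩ := IH _ (sub_opow_log_lt_self hξ)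
  refine ⟨log ω ξ :: l, chain_log_cons hl hs.symm, ?_⟩
  simp only [List.map_cons, List.sum_cons, ← hs]
  exact (Ordinal.add_sub_cancel_of_le (opow_log_le_self ω hξ)).symm

theorem zero_mem_CNA (ξ : Ordinal) : 0 ∈ CNA ξ := by
  obtain ⟨l, hl, hs⟩ := exists_chain_sum_map_opow_eq ξ
  exact ⟨[], l, hl, hs, by simp⟩

theorem mem_CNA_iff {ξ η : Ordinal} (hξ : ξ ≠ 0) :
    η ∈ CNA ξ ↔ η = 0 ∨ ∃ η' ∈ CNA (ξ - ω ^ log ω ξ), η = ω ^ log ω ξ + η' := by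
  constructor
  · rintro ⟨_ | ⟨a, t⟩, l₂, hc, hs, rfl⟩
    · simp
    rw [List.cons_append] at hc hs
    have ha : log ω ξ = a := hs ▸ log_sum_map_opow_cons hc
    refine Or.inr ⟨_, ⟨t, l₂, hc.tail, ?_, rfl⟩, by simp [ha]⟩
    refine Ordinal.sub_eq_of_add_eq ?_
    rw [ha, hs, List.map_cons, List.sum_cons]
  · rintro (rfl | ⟨η', ⟨l₁, l₂, hc, hs, rfl⟩, rfl⟩)
    · exact zero_mem_CNA ξ
    refine ⟨log ω ξ :: l₁, l₂, chain_log_cons hc hs.symm, ?_, by simp⟩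
    rw [List.cons_append, List.map_cons, List.sum_cons, ← hs]
    exact (Ordinal.add_sub_cancel_of_le (opow_log_le_self ω hξ)).symm

theorem sub_eq_self_of_lt_opow_log {ξ ζ : Ordinal} (hξ : ξ ≠ 0) (hζ : ζ < ω ^ log ω ξ) :
    ξ - ζ = ξ := by
  conv_lhs => rw [← add_of_omega0_opow_le hζ (opow_log_le_self ω hξ)]
  exact Ordinal.add_sub_cancel ζ ξ

theorem isGreatest_CNA_inter_Iic_zero {ξ ζ : Ordinal} (hξ : ξ ≠ 0) (hζ : ζ < ω ^ log ω ξ) :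
    IsGreatest (CNA ξ ∩ Set.Iic ζ) 0 := by
  refine ⟨⟨zero_mem_CNA ξ, Set.mem_Iic.2 zero_le⟩, ?_⟩
  rintro η ⟨hη, hηζ⟩
  obtain rfl | ⟨η', -, rfl⟩ := (mem_CNA_iff hξ).1 hη
  · exact le_rfl
  · exact absurd (le_self_add.trans hηζ) hζ.not_ge

theorem isGreatest_CNA_inter_Iic_opow_log_add {ξ δ η' : Ordinal} (hξ : ξ ≠ 0)
    (h : IsGreatest (CNA (ξ - ω ^ log ω ξ) ∩ Set.Iic δ) η') :
    IsGreatest (CNA ξ ∩ Set.Iic (ω ^ log ω ξ + δ)) (ω ^ log ω ξ + η') := by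
  refine ⟨⟨(mem_CNA_iff hξ).2 (Or.inr ⟨η', h.1.1, rfl⟩),
    Set.mem_Iic.2 (add_le_add_right h.1.2 _)⟩, ?_⟩
  rintro η ⟨hη, hηζ⟩
  obtain rfl | ⟨η₁, hη₁, rfl⟩ := (mem_CNA_iff hξ).1 hη
  · exact zero_le
  · exact add_le_add_right (h.2 ⟨hη₁, Set.mem_Iic.2 (le_of_add_le_add_left hηζ)⟩) _

theorem exists_isGreatest_CNA_inter_Iic_sub_eq (ξ : Ordinal) :
    ∀ ζ ≤ ξ, ∃ η, IsGreatest (CNA ξ ∩ Set.Iic ζ) η ∧ ξ - ζ = ξ - η := by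
  induction ξ using WellFoundedLT.induction with
  | ind ξ IH =>
  intro ζ hζ
  rcases eq_or_ne ξ 0 with rfl | hξ
  · obtain rfl := nonpos_iff_eq_zero.1 hζ
    exact ⟨0, ⟨⟨zero_mem_CNA 0, Set.mem_Iic.2 le_rfl⟩, fun η hη => hη.2⟩, rfl⟩
  rcases lt_or_ge ζ (ω ^ log ω ξ) with hlt | hge
  · refine ⟨0, isGreatest_CNA_inter_Iic_zero hξ hlt, ?_⟩
    rw [sub_eq_self_of_lt_opow_log hξ hlt, Ordinal.sub_zero]
  obtain ⟨δ, rfl⟩ := exists_add_of_le hge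
  have hδ : δ ≤ ξ - ω ^ log ω ξ := (Ordinal.le_sub_of_le (opow_log_le_self ω hξ)).2 hζ
  obtain ⟨η', hη', hsub⟩ := IH _ (sub_opow_log_lt_self hξ) δ hδ
  refine ⟨_, isGreatest_CNA_inter_Iic_opow_log_add hξ hη', ?_⟩
  rw [← Ordinal.sub_sub, ← Ordinal.sub_sub, hsub]

/-- For ordinals `ζ ≤ ξ`: `−ζ + ξ = −CNP(ζ,ξ) + ξ` (left subtraction `ξ - ζ`). -/
theorem stmt7 (ζ ξ : Ordinal) (h : ζ ≤ ξ) :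
    ξ - ζ = ξ - CNP ζ ξ := by
  obtain ⟨η, hη, hsub⟩ := exists_isGreatest_CNA_inter_Iic_sub_eq ξ ζ h
  rw [CNP, hsub]
  exact congrArg (ξ - ·) hη.csSup_eq.symm
end

section
/- For all ordinals ζ ≤ ξ there exists a unique η ∈ CNA(ξ) such that −ζ + ξ = −η + ξ. -/
/-!
Write ordinals as sums `osum L` of `ω`-powers of lists of exponents. A weakly decreasing `L` is
the Cantor normal form and is determined by its sum, since `log ω (osum (e :: L)) = e` recovers
the head. Given `ζ ≤ osum L`, walk down `L`: while `ζ ≥ ω ^ e` for the head `e`,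
peel `ω ^ e` off both; at the first head with `ζ < ω ^ e` the remainder of `ζ` is absorbed, so
`L = l₁ ++ l₂` with `ζ + osum l₂ = osum L`. Hence `ξ - ζ = osum l₂ = ξ - osum l₁`, and the
suffix `l₂`, hence the prefix `l₁`, is pinned down by the value `ξ - ζ`.
-/

open Ordinal

noncomputable def osum (l : List Ordinal) : Ordinal := (l.map fun e => ω ^ e).sum

@[simp]
theorem osum_nil : osum [] = 0 := rfl

@[simp]
theorem osum_cons (e : Ordinal) (l : List Ordinal) : osum (e :: l) = ω ^ e + osum l := by
  simp [osum]

@[simp]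
theorem osum_append (l m : List Ordinal) : osum (l ++ m) = osum l + osum m := by
  simp [osum]

theorem osum_replicate (n : ℕ) (e : Ordinal) : osum (List.replicate n e) = ω ^ e * n := by
  induction n with
  | zero => simp
  | succ n ih => rw [List.replicate_succ', osum_append, ih]; simp [mul_add]

theorem opow_le_osum_of_mem {l : List Ordinal} {f : Ordinal} (hf : f ∈ l) : ω ^ f ≤ osum l := by
  induction l with
  | nil => simp at hf
  | cons e l ih =>
    rw [osum_cons]
    rcases List.mem_cons.1 hf with rfl | hf
    · exact le_self_add
    · exact (ih hf).trans le_add_self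

theorem osum_lt_opow {l : List Ordinal} {a : Ordinal} (h : ∀ f ∈ l, f < a) :
    osum l < ω ^ a := by
  induction l with
  | nil => exact opow_pos _ omega0_pos
  | cons e l ih =>
    rw [osum_cons]
    exact isPrincipal_add_omega0_opow a
      ((opow_lt_opow_iff_right one_lt_omega0).2 (h e List.mem_cons_self))
      (ih fun f hf => h f (List.mem_cons_of_mem e hf))

theorem log_osum_cons {e : Ordinal} {l : List Ordinal} (hl : (e :: l).Pairwise (· ≥ ·)) :
    log ω (osum (e :: l)) = e := by
  have hle : ω ^ e ≤ osum (e :: l) := opow_le_osum_of_mem List.mem_cons_self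
  refine (log_eq_iff one_lt_omega0 (opow_pos e omega0_pos |>.trans_le hle).ne' e).2 ⟨hle, ?_⟩
  refine osum_lt_opow fun f hf => Order.lt_add_one_iff.2 ?_
  rcases List.mem_cons.1 hf with rfl | hf
  · exact le_rfl
  · exact List.rel_of_pairwise_cons hl hf

theorem osum_injective_of_pairwise {l m : List Ordinal} (hl : l.Pairwise (· ≥ ·))
    (hm : m.Pairwise (· ≥ ·)) (h : osum l = osum m) : l = m := by
  induction l generalizing m with
  | nil =>
    cases m with
    | nil => rfl
    | cons f m => exact absurd h (opow_pos f omega0_pos |>.trans_le le_self_add).ne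
  | cons e l ih =>
    cases m with
    | nil => exact absurd h (opow_pos e omega0_pos |>.trans_le le_self_add).ne'
    | cons f m =>
      obtain rfl : e = f := by rw [← log_osum_cons hl, h, log_osum_cons hm]
      rw [ih hl.of_cons hm.of_cons (by simpa using h)]

theorem exists_pairwise_osum_eq (ξ : Ordinal) :
    ∃ L : List Ordinal, L.Pairwise (· ≥ ·) ∧ osum L = ξ := by
  induction ξ using WellFoundedLT.induction with
  | ind ξ IH =>
    rcases eq_or_ne ξ 0 with rfl | hξ
    · exact ⟨[], .nil, rfl⟩
    set e := log ω ξ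
    have hmod : ξ % ω ^ e < ω ^ e := mod_lt ξ (opow_pos e omega0_pos).ne'
    obtain ⟨L, hL, hsum⟩ := IH _ (hmod.trans_le (opow_log_le_self ω hξ))
    obtain ⟨n, hn⟩ := lt_omega0.1 (div_opow_log_lt ξ one_lt_omega0)
    refine ⟨List.replicate n e ++ L, ?_, ?_⟩
    · refine List.pairwise_append.2 ⟨List.pairwise_replicate.2 (.inr le_rfl), hL, ?_⟩
      intro a ha b hb
      rw [List.eq_of_mem_replicate ha]
      refine ((opow_lt_opow_iff_right one_lt_omega0).1 ?_).le
      exact (opow_le_osum_of_mem hb).trans_lt (hsum ▸ hmod)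
    · rw [osum_append, osum_replicate, hsum, ← hn, div_add_mod]

theorem exists_append_eq_and_add_osum_eq (L : List Ordinal) {ζ : Ordinal} (hζ : ζ ≤ osum L) :
    ∃ l₁ l₂, L = l₁ ++ l₂ ∧ ζ + osum l₂ = osum L := by
  induction L generalizing ζ with
  | nil => exact ⟨[], [], rfl, by simpa using hζ⟩
  | cons e L ih =>
    rcases lt_or_ge ζ (ω ^ e) with hlt | hle
    · refine ⟨[], e :: L, rfl, ?_⟩
      rw [osum_cons, ← add_assoc, add_of_omega0_opow_le hlt le_rfl]
    · rw [← Ordinal.add_sub_cancel_of_le hle, osum_cons, add_le_add_iff_left] at hζ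
      obtain ⟨l₁, l₂, rfl, h⟩ := ih hζ
      refine ⟨e :: l₁, l₂, rfl, ?_⟩
      rw [← Ordinal.add_sub_cancel_of_le hle, add_assoc, h, osum_cons]

theorem mem_CNA_osum {L : List Ordinal} {η : Ordinal} (hL : L.Pairwise (· ≥ ·)) :
    η ∈ CNA (osum L) ↔ ∃ l₁ l₂, L = l₁ ++ l₂ ∧ η = osum l₁ := by
  constructor
  · rintro ⟨l₁, l₂, hc, hsum, rfl⟩
    exact ⟨l₁, l₂, osum_injective_of_pairwise hL (List.isChain_iff_pairwise.1 hc) hsum, rfl⟩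
  · rintro ⟨l₁, l₂, rfl, rfl⟩
    exact ⟨l₁, l₂, List.isChain_iff_pairwise.2 hL, rfl, rfl⟩

/-- For ordinals `ζ ≤ ξ` there is a unique `η ∈ CNA ξ` with `−ζ + ξ = −η + ξ`. -/
theorem stmt8 (ζ ξ : Ordinal) (h : ζ ≤ ξ) :
    ∃! η : Ordinal, η ∈ CNA ξ ∧ ξ - ζ = ξ - η := by
  obtain ⟨L, hL, rfl⟩ := exists_pairwise_osum_eq ξ
  obtain ⟨l₁, l₂, rfl, hζ⟩ := exists_append_eq_and_add_osum_eq _ h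
  have hsub : osum (l₁ ++ l₂) - ζ = osum l₂ := by rw [← hζ, Ordinal.add_sub_cancel]
  refine ⟨osum l₁, ⟨(mem_CNA_osum hL).2 ⟨l₁, l₂, rfl, rfl⟩, ?_⟩, ?_⟩
  · rw [hsub, osum_append, Ordinal.add_sub_cancel]
  · rintro _ ⟨hη, hη_sub⟩
    obtain ⟨m₁, m₂, hm, rfl⟩ := (mem_CNA_osum hL).1 hη
    have hm₂ : m₂ = l₂ := by
      refine osum_injective_of_pairwise ((hm ▸ hL).sublist (List.sublist_append_right _ _))
        (hL.sublist (List.sublist_append_right _ _)) ?_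
      rw [← hsub, hη_sub, hm, osum_append, Ordinal.add_sub_cancel]
    subst hm₂
    rw [List.append_cancel_right hm]
end

section
/- For all ordinals ξ, ζ, η with ξ ≤ η and ζ ≤ η, one has −ξ + η = −ζ + η if and only if CNP(ξ, η) = CNP(ζ, η). -/
open Ordinal

/-!
Fix the weakly decreasing exponent list `l` of `η`; it is unique, so `CNA η` consists of the
sums over the prefixes of `l`. For `ξ ≤ η`, let `l = l₁ ++ l₂` with `l₁` the longest prefix whose
sum is `≤ ξ`. The next term `ω ^ e` of `l` exceeds the remainder of `ξ` over the sum of `l₁`, so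
that remainder is absorbed by the sum of `l₂`: hence `CNP ξ η` is the sum of `l₁` and `−ξ + η`
is the sum of `l₂`. By uniqueness of representations (applied to the decreasing lists `l₂`, resp.
`l₁`) the suffix sums of two such splits agree iff the splits agree iff the prefix sums agree.
-/

noncomputable def opowSum (l : List Ordinal) : Ordinal := (l.map fun e => ω ^ e).sum

lemma opowSum_cons (e : Ordinal) (l : List Ordinal) :
    opowSum (e :: l) = ω ^ e + opowSum l := rfl

lemma opowSum_cons_pos (e : Ordinal) (l : List Ordinal) : 0 < opowSum (e :: l) :=
  (opow_pos e omega0_pos).trans_le le_self_add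

lemma opowSum_lt_opow_add_one {e : Ordinal} {l : List Ordinal} (h : ∀ f ∈ l, f ≤ e) :
    opowSum l < ω ^ (e + 1) := by
  induction l with
  | nil => exact opow_pos _ omega0_pos
  | cons f l ih =>
    rw [List.forall_mem_cons] at h
    exact isPrincipal_add_omega0_opow _
      ((opow_lt_opow_iff_right one_lt_omega0).2 (Order.lt_add_one_iff.2 h.1)) (ih h.2)

lemma log_opowSum_cons {e : Ordinal} {l : List Ordinal} (hl : (e :: l).IsChain (· ≥ ·)) :
    log ω (opowSum (e :: l)) = e := by
  have hle : ∀ f ∈ l, f ≤ e := fun f hf =>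
    List.rel_of_pairwise_cons (List.isChain_iff_pairwise.1 hl) hf
  rw [log_eq_iff one_lt_omega0 (opowSum_cons_pos e l).ne']
  exact ⟨le_self_add, opowSum_lt_opow_add_one (List.forall_mem_cons.2 ⟨le_rfl, hle⟩)⟩

theorem eq_of_opowSum_eq : ∀ {l l' : List Ordinal}, l.IsChain (· ≥ ·) → l'.IsChain (· ≥ ·) →
    opowSum l = opowSum l' → l = l'
  | [], [], _, _, _ => rfl
  | [], e :: l', _, _, h => absurd h (opowSum_cons_pos e l').ne
  | e :: l, [], _, _, h => absurd h (opowSum_cons_pos e l).ne'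
  | e :: l, e' :: l', hl, hl', h => by
    obtain rfl : e = e' := by rw [← log_opowSum_cons hl, h, log_opowSum_cons hl']
    rw [opowSum_cons, opowSum_cons, add_left_cancel_iff] at h
    exact congrArg _ (eq_of_opowSum_eq hl.tail hl'.tail h)

theorem exists_chain_opowSum_eq (η : Ordinal) :
    ∃ l : List Ordinal, l.IsChain (· ≥ ·) ∧ (∀ f ∈ l, f ≤ log ω η) ∧ opowSum l = η := by
  induction η using WellFoundedLT.induction with
  | _ η ih =>
  rcases eq_or_ne η 0 with rfl | hη
  · exact ⟨[], List.isChain_nil, by simp, rfl⟩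
  set e := log ω η
  obtain ⟨ρ, hρη⟩ : ∃ ρ, ω ^ e + ρ = η :=
    ⟨η - ω ^ e, Ordinal.add_sub_cancel_of_le (opow_log_le_self ω hη)⟩
  -- `ρ = η` would give `ω ^ e * ω ≤ η`, against the maximality of `e`.
  have hρ : ρ < η := by
    refine (hρη ▸ le_add_self).lt_of_ne fun h => ?_
    have hle : ω ^ e * ω ≤ η := add_eq_right_iff_mul_omega0_le.1 (h ▸ hρη)
    rw [← opow_succ] at hle
    exact (lt_opow_succ_log_self one_lt_omega0 η).not_ge hle
  obtain ⟨l, hl, hle, rfl⟩ := ih ρ hρ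
  have hle' : ∀ f ∈ l, f ≤ e := fun f hf => (hle f hf).trans (log_mono_right ω hρ.le)
  refine ⟨e :: l, List.isChain_cons.2 ⟨fun f hf => hle' f (List.mem_of_mem_head? hf), hl⟩,
    List.forall_mem_cons.2 ⟨le_rfl, hle'⟩, hρη⟩

theorem exists_greatest_prefix_le {ξ : Ordinal} {l : List Ordinal} (hξ : ξ ≤ opowSum l) :
    ∃ l₁ l₂, l₁ ++ l₂ = l ∧ opowSum l₁ ≤ ξ ∧
      (∀ m₁ m₂, m₁ ++ m₂ = l → opowSum m₁ ≤ ξ → opowSum m₁ ≤ opowSum l₁) ∧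
      ξ + opowSum l₂ = opowSum l := by
  induction l generalizing ξ with
  | nil =>
    obtain rfl : ξ = 0 := nonpos_iff_eq_zero.1 hξ
    refine ⟨[], [], rfl, le_rfl, fun m₁ m₂ hm _ => ?_, add_zero 0⟩
    rw [(List.append_eq_nil_iff.1 hm).1]
  | cons e t ih =>
    rcases lt_or_ge ξ (ω ^ e) with hξe | heξ
    · refine ⟨[], e :: t, rfl, zero_le, fun m₁ m₂ hm hmξ => ?_,
        add_of_omega0_opow_le hξe le_self_add⟩
      cases m₁ with
      | nil => exact le_rfl
      | cons f m₁ =>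
        rw [List.cons_append, List.cons_eq_cons] at hm
        obtain ⟨rfl, -⟩ := hm
        exact absurd ((le_self_add.trans hmξ).trans_lt hξe) (lt_irrefl _)
    · obtain ⟨δ, rfl⟩ : ∃ δ, ξ = ω ^ e + δ := ⟨ξ - ω ^ e, (Ordinal.add_sub_cancel_of_le heξ).symm⟩
      rw [opowSum_cons, add_le_add_iff_left] at hξ
      obtain ⟨l₁, l₂, hsplit, hle, hmax, hsum⟩ := ih hξ
      refine ⟨e :: l₁, l₂, by rw [List.cons_append, hsplit], ?_, fun m₁ m₂ hm hmξ => ?_, ?_⟩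
      · rwa [opowSum_cons, add_le_add_iff_left]
      · cases m₁ with
        | nil => exact zero_le
        | cons f m₁ =>
          rw [List.cons_append, List.cons_eq_cons] at hm
          obtain ⟨rfl, hm⟩ := hm
          rw [opowSum_cons, add_le_add_iff_left] at hmξ
          rw [opowSum_cons, opowSum_cons, add_le_add_iff_left]
          exact hmax m₁ m₂ hm hmξ
      · rw [opowSum_cons, add_assoc, hsum]

theorem mem_CNA_opowSum_iff {l : List Ordinal} (hl : l.IsChain (· ≥ ·)) {π : Ordinal} :
    π ∈ CNA (opowSum l) ↔ ∃ l₁ l₂, l₁ ++ l₂ = l ∧ π = opowSum l₁ := by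
  constructor
  · rintro ⟨l₁, l₂, hc, hsum, rfl⟩
    exact ⟨l₁, l₂, eq_of_opowSum_eq hc hl hsum.symm, rfl⟩
  · rintro ⟨l₁, l₂, rfl, rfl⟩
    exact ⟨l₁, l₂, hl, rfl, rfl⟩

theorem exists_CNP_opowSum_eq_and_sub_eq {l : List Ordinal} (hl : l.IsChain (· ≥ ·))
    {ξ : Ordinal} (hξ : ξ ≤ opowSum l) :
    ∃ l₁ l₂, l₁ ++ l₂ = l ∧ CNP ξ (opowSum l) = opowSum l₁ ∧ opowSum l - ξ = opowSum l₂ := by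
  obtain ⟨l₁, l₂, rfl, hle, hmax, hsum⟩ := exists_greatest_prefix_le hξ
  refine ⟨l₁, l₂, rfl, IsGreatest.csSup_eq ⟨⟨(mem_CNA_opowSum_iff hl).2 ⟨l₁, l₂, rfl, rfl⟩, hle⟩,
    ?_⟩, sub_eq_of_add_eq hsum⟩
  rintro π ⟨hπ, hπξ⟩
  obtain ⟨m₁, m₂, hm, rfl⟩ := (mem_CNA_opowSum_iff hl).1 hπ
  exact hmax m₁ m₂ hm hπξ

theorem opowSum_eq_iff_of_append_eq {l₁ l₂ m₁ m₂ : List Ordinal}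
    (hl : (l₁ ++ l₂).IsChain (· ≥ ·)) (h : l₁ ++ l₂ = m₁ ++ m₂) :
    opowSum l₂ = opowSum m₂ ↔ opowSum l₁ = opowSum m₁ := by
  have hm : (m₁ ++ m₂).IsChain (· ≥ ·) := h ▸ hl
  constructor
  · intro h₂
    obtain rfl := eq_of_opowSum_eq hl.right_of_append hm.right_of_append h₂
    rw [List.append_cancel_right h]
  · intro h₁
    obtain rfl := eq_of_opowSum_eq hl.left_of_append hm.left_of_append h₁
    rw [List.append_cancel_left h]

/-- For ordinals `ξ ≤ η` and `ζ ≤ η`: `−ξ + η = −ζ + η` iff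
`CNP(ξ,η) = CNP(ζ,η)`. -/
theorem stmt9 (ξ ζ η : Ordinal) (hξ : ξ ≤ η) (hζ : ζ ≤ η) :
    η - ξ = η - ζ ↔ CNP ξ η = CNP ζ η := by
  obtain ⟨l, hl, -, rfl⟩ := exists_chain_opowSum_eq η
  obtain ⟨l₁, l₂, rfl, hCNPξ, hsubξ⟩ := exists_CNP_opowSum_eq_and_sub_eq hl hξ
  obtain ⟨m₁, m₂, hm, hCNPζ, hsubζ⟩ := exists_CNP_opowSum_eq_and_sub_eq hl hζ
  rw [hCNPξ, hCNPζ, hsubξ, hsubζ]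
  exact opowSum_eq_iff_of_append_eq hl hm.symm
end

section
/- Let f be a normal ordinal function and let g be the minimal weak hyperation of f. Then for every ordinal α, g(ω^α) equals the α-th function f_α of the Veblen progression based on f. -/
open Ordinal

/-- `g` is a weak hyperation of the normal function `f`: a family of normal
functions with `g 0 = id`, `g 1 = f`, and `g (ξ + ζ) = g ξ ∘ g ζ`. -/
def IsWeakHyperation (f : Ordinal → Ordinal) (g : Ordinal → Ordinal → Ordinal) : Prop :=
  (∀ ξ : Ordinal, Order.IsNormal (g ξ)) ∧
  g 0 = id ∧ g 1 = f ∧ ∀ ξ ζ : Ordinal, g (ξ + ζ) = g ξ ∘ g ζ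

/-- `g` is the hyperation of `f`: the pointwise minimal weak hyperation of `f`. -/
def IsHyperation (f : Ordinal → Ordinal) (g : Ordinal → Ordinal → Ordinal) : Prop :=
  IsWeakHyperation f g ∧
  ∀ h : Ordinal → Ordinal → Ordinal, IsWeakHyperation f h → ∀ ξ ζ : Ordinal, g ξ ζ ≤ h ξ ζ

/-- `V` is the Veblen progression based on `f`: `V 0 = f`, `V (α+1)` is the
derivative of `V α` (the function enumerating the fixed points of `V α`), and
for limit `λ`, `V λ` enumerates the common fixed points of all `V α`, `α < λ`. -/
def IsVeblenProgression (f : Ordinal → Ordinal) (V : Ordinal → Ordinal → Ordinal) : Prop :=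
  V 0 = f ∧
  (∀ α : Ordinal, V (α + 1) = enumOrd {x | V α x = x}) ∧
  (∀ l : Ordinal, Order.IsSuccLimit l → V l = enumOrd {x | ∀ α < l, V α x = x})

/-! For a weak hyperation `g` and `α < γ` we have `ω ^ α + ω ^ γ = ω ^ γ`, hence
`g (ω ^ α) ∘ g (ω ^ γ) = g (ω ^ γ)`: the values of `g (ω ^ β)` are common fixed points of the
`g (ω ^ α)`, `α < β`, so `g (ω ^ β)` dominates the enumeration `E` of these common fixed points.
Conversely, every family `W` of normal functions with `W α ∘ W γ = W γ` for `α < γ` gives a weak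
hyperation of `W 0`, sending `ω ^ e₁ + ⋯ + ω ^ eₖ` (Cantor normal form) to `W e₁ ∘ ⋯ ∘ W eₖ`.
Applied to the family `α ↦ g (ω ^ α)` with its `β`-th member replaced by `E`, minimality of `g`
gives `g (ω ^ β) ≤ E`. Thus `g (ω ^ β) = E` for `β ≠ 0`, which is the recursion defining the
Veblen progression. -/

open Set Function

namespace Hyperation

universe u v

variable {W : Ordinal.{u} → Ordinal.{v} → Ordinal.{v}}

def IsAbsorbing (W : Ordinal.{u} → Ordinal.{v} → Ordinal.{v}) : Prop :=
  ∀ ⦃α γ⦄, α < γ → W α ∘ W γ = W γ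

def fixedPointsBelow (W : Ordinal.{u} → Ordinal.{v} → Ordinal.{v}) (β : Ordinal.{u}) :
    Set Ordinal.{v} :=
  {x | ∀ α < β, W α x = x}

theorem fixedPointsBelow_congr {W' : Ordinal.{u} → Ordinal.{v} → Ordinal.{v}} {β : Ordinal.{u}}
    (h : ∀ α < β, W α = W' α) : fixedPointsBelow W β = fixedPointsBelow W' β := by
  ext x
  exact forall₂_congr fun α hα => by rw [h α hα]

theorem sSup_mem_fixedPointsBelow (hWn : ∀ α, Order.IsNormal (W α)) {β : Ordinal.{u}}
    {t : Set Ordinal.{v}} (ht : t ⊆ fixedPointsBelow W β) (hne : t.Nonempty) (hbdd : BddAbove t) :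
    sSup t ∈ fixedPointsBelow W β := fun α hα => by
  rw [(hWn α).map_sSup hne hbdd, EqOn.image_eq_self fun x hx => ht hx α hα]

namespace IsAbsorbing

theorem range_subset_fixedPointsBelow (hW : IsAbsorbing W) (β : Ordinal.{u}) :
    range (W β) ⊆ fixedPointsBelow W β := by
  rintro _ ⟨x, rfl⟩ α hα
  exact congrFun (hW hα) x

theorem fixedPointsBelow_add_one (hW : IsAbsorbing W) (β : Ordinal.{u}) :
    fixedPointsBelow W (β + 1) = {x | W β x = x} := by
  ext x
  refine ⟨fun hx => hx β (lt_add_one β), fun hx α hα => ?_⟩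
  rcases (Order.lt_add_one_iff.1 hα).lt_or_eq with h | rfl
  · rw [← hx]
    exact congrFun (hW h) x
  · exact hx

variable (hWn : ∀ α, Order.IsNormal (W α)) (hW : IsAbsorbing W) (β : Ordinal.{u})
include hWn hW

theorem not_bddAbove_fixedPointsBelow : ¬ BddAbove (fixedPointsBelow W β) := fun hb =>
  (hWn β).strictMono.not_bddAbove_range_of_wellFoundedLT
    (hb.mono (hW.range_subset_fixedPointsBelow β))

theorem isNormal_enumOrd_fixedPointsBelow : Order.IsNormal (enumOrd (fixedPointsBelow W β)) :=
  isNormal_enumOrd (fun _ ht hne hbdd => sSup_mem_fixedPointsBelow hWn ht hne hbdd)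
    (hW.not_bddAbove_fixedPointsBelow hWn β)

theorem enumOrd_fixedPointsBelow_le (x : Ordinal.{v}) :
    enumOrd (fixedPointsBelow W β) x ≤ W β x := by
  have hmono := (hWn β).strictMono
  calc enumOrd (fixedPointsBelow W β) x ≤ enumOrd (range (W β)) x :=
        enumOrd_le_of_subset hmono.not_bddAbove_range_of_wellFoundedLT
          (hW.range_subset_fixedPointsBelow β) x
    _ = W β x := by rw [enumOrd_range hmono]

theorem update_enumOrd_fixedPointsBelow :
    IsAbsorbing (update W β (enumOrd (fixedPointsBelow W β))) := by
  set E := enumOrd (fixedPointsBelow W β)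
  have hbdd := hW.not_bddAbove_fixedPointsBelow hWn β
  -- `id ≤ E ≤ W β`
  have hE_of_fixed : ∀ y, W β y = y → E y = y := fun y hy =>
    le_antisymm ((hW.enumOrd_fixedPointsBelow_le hWn β y).trans_eq hy) (le_enumOrd_self hbdd)
  intro α γ hαγ
  funext x
  rcases eq_or_ne γ β with rfl | hγ
  · rw [comp_apply, update_of_ne hαγ.ne, update_self]
    exact enumOrd_mem hbdd x α hαγ
  · rw [comp_apply, update_of_ne hγ]
    rcases eq_or_ne α β with rfl | hα
    · rw [update_self]
      exact hE_of_fixed _ (congrFun (hW hαγ) x)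
    · rw [update_of_ne hα]
      exact congrFun (hW hαγ) x

end IsAbsorbing

/-- `composeCNF W (ω ^ e₁ + ⋯ + ω ^ eₖ) = W e₁ ∘ ⋯ ∘ W eₖ` for `e₁ ≥ ⋯ ≥ eₖ`. -/
noncomputable def composeCNF (W : Ordinal.{u} → Ordinal.{v} → Ordinal.{v}) (ξ : Ordinal.{u}) :
    Ordinal.{v} → Ordinal.{v} :=
  if h : ξ = 0 then id
  else
    have := sub_omega0_opow_log_lt h
    W (log ω ξ) ∘ composeCNF W (ξ - ω ^ log ω ξ)
termination_by ξ

theorem composeCNF_zero (W : Ordinal.{u} → Ordinal.{v} → Ordinal.{v}) : composeCNF W 0 = id := by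
  rw [composeCNF, dif_pos rfl]

theorem composeCNF_of_ne_zero {ξ : Ordinal.{u}} (h : ξ ≠ 0) :
    composeCNF W ξ = W (log ω ξ) ∘ composeCNF W (ξ - ω ^ log ω ξ) := by
  rw [composeCNF, dif_neg h]

theorem isNormal_composeCNF (hWn : ∀ α, Order.IsNormal (W α)) (ξ : Ordinal.{u}) :
    Order.IsNormal (composeCNF W ξ) := by
  induction ξ using WellFoundedLT.induction with
  | _ ξ ih =>
    rcases eq_or_ne ξ 0 with rfl | hξ
    · rw [composeCNF_zero]
      exact Order.IsNormal.id
    · rw [composeCNF_of_ne_zero hξ]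
      exact (hWn _).comp (ih _ (sub_omega0_opow_log_lt hξ))

namespace IsAbsorbing

variable (hW : IsAbsorbing W)
include hW

theorem composeCNF_omega0_opow_add (e ζ : Ordinal.{u}) :
    composeCNF W (ω ^ e + ζ) = W e ∘ composeCNF W ζ := by
  rcases le_or_gt (log ω ζ) e with hle | hlt
  · have hne : ω ^ e + ζ ≠ 0 := (opow_pos e omega0_pos).trans_le le_self_add |>.ne'
    have hζ : ζ < ω ^ (e + 1) :=
      (lt_opow_succ_log_self one_lt_omega0 ζ).trans_le
        (opow_le_opow_right omega0_pos (Order.succ_le_succ hle))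
    have hlog : log ω (ω ^ e + ζ) = e :=
      (log_eq_iff one_lt_omega0 hne e).2 ⟨le_self_add, isPrincipal_add_omega0_opow (e + 1)
        ((opow_lt_opow_iff_right one_lt_omega0).2 (lt_add_one e)) hζ⟩
    rw [composeCNF_of_ne_zero hne, hlog, Ordinal.add_sub_cancel]
  · have hζ : ζ ≠ 0 := by
      rintro rfl
      simp at hlt
    rw [add_of_omega0_opow_le ((opow_lt_opow_iff_right one_lt_omega0).2 hlt)
        (opow_log_le_self ω hζ), composeCNF_of_ne_zero hζ, ← comp_assoc, hW hlt]

theorem composeCNF_omega0_opow (e : Ordinal.{u}) : composeCNF W (ω ^ e) = W e := by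
  simpa [composeCNF_zero] using hW.composeCNF_omega0_opow_add e 0

theorem composeCNF_add (ξ ζ : Ordinal.{u}) :
    composeCNF W (ξ + ζ) = composeCNF W ξ ∘ composeCNF W ζ := by
  induction ξ using WellFoundedLT.induction generalizing ζ with
  | _ ξ ih =>
    rcases eq_or_ne ξ 0 with rfl | hξ
    · rw [zero_add, composeCNF_zero, id_comp]
    · have hsplit : ω ^ log ω ξ + (ξ - ω ^ log ω ξ) = ξ :=
        Ordinal.add_sub_cancel_of_le (opow_log_le_self ω hξ)
      rw [← hsplit, add_assoc, hW.composeCNF_omega0_opow_add,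
        ih _ (sub_omega0_opow_log_lt hξ), hW.composeCNF_omega0_opow_add]
      rfl

theorem isWeakHyperation_composeCNF (hWn : ∀ α, Order.IsNormal (W α)) :
    IsWeakHyperation (W 0) (composeCNF W) :=
  ⟨isNormal_composeCNF hWn, composeCNF_zero W, by simpa using hW.composeCNF_omega0_opow 0,
    hW.composeCNF_add⟩

end IsAbsorbing

variable {f : Ordinal.{v} → Ordinal.{v}} {g : Ordinal.{u} → Ordinal.{v} → Ordinal.{v}}

theorem _root_.IsWeakHyperation.isAbsorbing (hg : IsWeakHyperation f g) :
    IsAbsorbing fun α => g (ω ^ α) := by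
  intro α γ h
  rw [← hg.2.2.2, add_omega0_opow ((opow_lt_opow_iff_right one_lt_omega0).2 h)]

theorem _root_.IsHyperation.omega0_opow_eq_enumOrd (hg : IsHyperation f g) {β : Ordinal.{u}}
    (hβ : β ≠ 0) : g (ω ^ β) = enumOrd (fixedPointsBelow (fun α => g (ω ^ α)) β) := by
  obtain ⟨hgw, hg_min⟩ := hg
  set G : Ordinal.{u} → Ordinal.{v} → Ordinal.{v} := fun α => g (ω ^ α)
  have hGn : ∀ α, Order.IsNormal (G α) := fun α => hgw.1 _
  have hG := hgw.isAbsorbing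
  set A := update G β (enumOrd (fixedPointsBelow G β)) with hA_def
  have hAn : ∀ α, Order.IsNormal (A α) :=
    (forall_update_iff G fun _ F => Order.IsNormal F).2
      ⟨hG.isNormal_enumOrd_fixedPointsBelow hGn β, fun α _ => hGn α⟩
  have hA := hG.update_enumOrd_fixedPointsBelow hGn β
  have hA0 : A 0 = f := by
    rw [hA_def, update_of_ne hβ.symm]
    simpa [G] using hgw.2.2.1
  have hA_weak : IsWeakHyperation f (composeCNF A) := hA0 ▸ hA.isWeakHyperation_composeCNF hAn
  funext x
  refine le_antisymm ?_ (hG.enumOrd_fixedPointsBelow_le hGn β x)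
  calc g (ω ^ β) x ≤ composeCNF A (ω ^ β) x := hg_min _ hA_weak _ x
    _ = enumOrd (fixedPointsBelow G β) x := by rw [hA.composeCNF_omega0_opow, update_self]

end Hyperation

theorem stmt11_general (f : Ordinal → Ordinal)
    (g : Ordinal → Ordinal → Ordinal) (hg : IsHyperation f g)
    (V : Ordinal → Ordinal → Ordinal) (hV : IsVeblenProgression f V) :
    ∀ α : Ordinal, g (ω ^ α) = V α := by
  obtain ⟨hV_zero, hV_succ, hV_limit⟩ := hV
  have hG := hg.1.isAbsorbing
  intro α
  induction α using Ordinal.limitRecOn with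
  | zero => rw [opow_zero, hg.1.2.2.1, hV_zero]
  | add_one δ ih =>
    rw [hg.omega0_opow_eq_enumOrd (Order.lt_add_one_iff.2 zero_le).ne',
      hG.fixedPointsBelow_add_one, hV_succ δ, ih]
  | limit l hl ih =>
    rw [hg.omega0_opow_eq_enumOrd hl.ne_bot, Hyperation.fixedPointsBelow_congr ih]
    exact (hV_limit l hl).symm

/-- If `g` is the (minimal weak) hyperation of the normal function `f` and `V`
is the Veblen progression based on `f`, then `g (ω ^ α) = V α` for all `α`. -/
theorem stmt11 (f : Ordinal → Ordinal) (hf : Order.IsNormal f)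
    (g : Ordinal → Ordinal → Ordinal) (hg : IsHyperation f g)
    (V : Ordinal → Ordinal → Ordinal) (hV : IsVeblenProgression f V) :
    ∀ α : Ordinal, g (ω ^ α) = V α :=
  stmt11_general f g hg V hV
end

section
/- Let f be a normal ordinal function with left adjoint g, let F be the hyperation of f and G the cohyperation of g. Then for all ordinals ξ < ζ and every ordinal α: G(ξ)(F(ζ)(α)) = F(−ξ + ζ)(α) and G(ζ)(F(ξ)(α)) = G(−ξ + ζ)(α). -/
/-!
It suffices to show that `G ξ ∘ F ξ = id`: then
`G ξ (F ζ α) = G ξ (F ξ (F (ζ - ξ) α))` and `G ζ (F ξ α) = G (ζ - ξ) (G ξ (F ξ α))`.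

Upper bound. Since `F ξ 0 = 0`, each `F ξ` has an upper adjoint `A ξ β = sup {α | F ξ α ≤ β}`;
these satisfy `A (ξ + ζ) = A ζ ∘ A ξ` and `g ≤ A 1`, and every weak cohyperation of `g` lies
below `A`. At `ξ = ω ^ c` this uses initiality together with the one consequence of the
minimality of `F` that matters: `F (ω ^ c)` enumerates exactly the common fixed points of the
`F η` with `η < ω ^ c`. This is seen by comparing `F` with the explicit hyperation built along
the Cantor normal form.

Lower bound. Along the Cantor normal form one builds a weak cohyperation `H` of `g` with
`H ξ ∘ F ξ = id`; by maximality `H ≤ G`.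
-/

open Ordinal

/-- `f` is initial: the image under `f` of every initial segment `[0, β)` of the
ordinals is again an initial segment. -/
def IsInitialFun (f : Ordinal → Ordinal) : Prop :=
  ∀ β : Ordinal, ∃ γ : Ordinal, f '' Set.Iio β = Set.Iio γ

/-- `g` is a weak cohyperation of the initial function `f`: a family of initial
functions with `g 0 = id`, `g 1 = f`, and `g (ξ + ζ) = g ζ ∘ g ξ`. -/
def IsWeakCohyperation (f : Ordinal → Ordinal) (g : Ordinal → Ordinal → Ordinal) : Prop :=
  (∀ ξ : Ordinal, IsInitialFun (g ξ)) ∧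
  g 0 = id ∧ g 1 = f ∧ ∀ ξ ζ : Ordinal, g (ξ + ζ) = g ζ ∘ g ξ

/-- `g` is the cohyperation of `f`: the pointwise maximal weak cohyperation of `f`. -/
def IsCohyperation (f : Ordinal → Ordinal) (g : Ordinal → Ordinal → Ordinal) : Prop :=
  IsWeakCohyperation f g ∧
  ∀ h : Ordinal → Ordinal → Ordinal, IsWeakCohyperation f h → ∀ ξ ζ : Ordinal, h ξ ζ ≤ g ξ ζ

/-- `g` is a left adjoint of `f`: `α = f β` implies `g α = β`, and `α < f β`
implies `g α < β`. -/
def IsLeftAdjoint (g f : Ordinal → Ordinal) : Prop :=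
  ∀ α β : Ordinal, (α = f β → g α = β) ∧ (α < f β → g α < β)

open Order Set

universe u v

namespace Ordinal

variable {a b : Ordinal.{u}}

theorem omega0_opow_log_add_sub (ha : a ≠ 0) : ω ^ log ω a + (a - ω ^ log ω a) = a :=
  Ordinal.add_sub_cancel_of_le (opow_log_le_self ω ha)

theorem add_sub_omega0_opow_log (ha : a ≠ 0) :
    a + b - ω ^ log ω a = (a - ω ^ log ω a) + b := by
  nth_rw 1 [← omega0_opow_log_add_sub ha]
  rw [add_assoc, Ordinal.add_sub_cancel]

theorem log_omega0_add (ha : a ≠ 0) (hb : ω ^ log ω b ≤ a) : log ω (a + b) = log ω a := by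
  rcases eq_or_ne b 0 with rfl | hb0
  · rw [add_zero]
  have hlog : log ω b ≤ log ω a := (opow_le_iff_le_log one_lt_omega0 ha).1 hb
  refine (log_eq_iff one_lt_omega0 (by simp [ha]) _).2
    ⟨(opow_log_le_self ω ha).trans le_self_add, ?_⟩
  rw [← succ_eq_add_one]
  refine isPrincipal_add_omega0_opow _ (lt_opow_succ_log_self one_lt_omega0 a) ?_
  exact (lt_opow_succ_log_self one_lt_omega0 b).trans_le
    (opow_le_opow_right omega0_pos (succ_le_succ hlog))

theorem map_add_of_leadingTerm {M : Type*} [Monoid M] (T : Ordinal.{v} → M) (h0 : T 0 = 1)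
    (hdec : ∀ ξ ≠ 0, T ξ = T (ω ^ log ω ξ) * T (ξ - ω ^ log ω ξ))
    (habs : ∀ ζ ≠ 0, (∀ ξ η, η < ζ → T (ξ + η) = T ξ * T η) →
      ∀ ξ < ω ^ log ω ζ, T ξ * T ζ = T ζ) (ξ ζ : Ordinal.{v}) :
    T (ξ + ζ) = T ξ * T ζ := by
  induction ζ using WellFoundedLT.induction generalizing ξ with | _ ζ ihζ
  induction ξ using WellFoundedLT.induction with | _ ξ ihξ
  rcases eq_or_ne ξ 0 with rfl | hξ
  · rw [zero_add, h0, one_mul]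
  rcases eq_or_ne ζ 0 with rfl | hζ
  · rw [add_zero, h0, mul_one]
  rcases lt_or_ge ξ (ω ^ log ω ζ) with hlt | hge
  · rw [add_of_omega0_opow_le hlt (opow_log_le_self ω hζ)]
    exact (habs ζ hζ (fun ξ' η hη ↦ ihζ η hη ξ') ξ hlt).symm
  · rw [hdec _ (by simp [hξ]), log_omega0_add hξ hge, add_sub_omega0_opow_log hξ,
      ihξ _ (sub_omega0_opow_log_lt hξ), ← mul_assoc, ← hdec ξ hξ]

end Ordinal

noncomputable def upperAdjoint (φ : Ordinal.{u} → Ordinal.{u}) (β : Ordinal.{u}) : Ordinal.{u} :=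
  sSup {α | φ α ≤ β}

section UpperAdjoint

variable {φ : Ordinal.{u} → Ordinal.{u}}

theorem gc_upperAdjoint (hφ : IsNormal φ) (h0 : φ 0 = 0) :
    GaloisConnection φ (upperAdjoint φ) := by
  intro α β
  have hne : {α | φ α ≤ β}.Nonempty := ⟨0, by simp [h0]⟩
  have hbdd : BddAbove {α | φ α ≤ β} := ⟨β, fun α hα ↦ hφ.strictMono.le_apply.trans hα⟩
  refine ⟨fun h ↦ le_csSup hbdd h, fun h ↦ (hφ.monotone h).trans ?_⟩
  rw [upperAdjoint, hφ.map_sSup hne hbdd]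
  exact csSup_le (hne.image φ) (by rintro _ ⟨α, hα, rfl⟩; exact hα)

theorem upperAdjoint_apply (hφ : StrictMono φ) (gc : GaloisConnection φ (upperAdjoint φ))
    (α : Ordinal.{u}) : upperAdjoint φ (φ α) = α :=
  le_antisymm (hφ.le_iff_le.1 (gc.l_u_le _)) (gc.le_u le_rfl)

theorem upperAdjoint_le (hφ : StrictMono φ) (gc : GaloisConnection φ (upperAdjoint φ))
    (β : Ordinal.{u}) : upperAdjoint φ β ≤ β :=
  hφ.le_apply.trans (gc.l_u_le β)

end UpperAdjoint

section LeftAdjoint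

variable {f g : Ordinal.{u} → Ordinal.{u}}

theorem IsLeftAdjoint.le_of_galoisConnection {r : Ordinal.{u} → Ordinal.{u}}
    (hadj : IsLeftAdjoint g f) (gc : GaloisConnection f r) (β : Ordinal.{u}) : g β ≤ r β :=
  gc.le_u (not_lt.1 fun h ↦ (hadj β (g β)).2 h |>.false)

theorem IsLeftAdjoint.right_map_zero (hadj : IsLeftAdjoint g f) : f 0 = 0 :=
  nonpos_iff_eq_zero.1 (not_lt.1 fun h ↦ not_lt_zero ((hadj 0 0).2 h))

theorem IsLeftAdjoint.apply_le (hadj : IsLeftAdjoint g f) (hf : IsNormal f) (x : Ordinal.{u}) :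
    g x ≤ x :=
  lt_succ_iff.1 ((hadj x (succ x)).2 ((lt_succ x).trans_le hf.strictMono.le_apply))

end LeftAdjoint

section Initial

variable {k l s : Ordinal.{u} → Ordinal.{u}}

theorem IsInitialFun.comp (hl : IsInitialFun l) (hk : IsInitialFun k) : IsInitialFun (l ∘ k) := by
  intro β
  obtain ⟨γ, hγ⟩ := hk β
  obtain ⟨δ, hδ⟩ := hl γ
  exact ⟨δ, by rw [image_comp, hγ, hδ]⟩

theorem IsInitialFun.exists_lt_apply_eq (hk : IsInitialFun k) {a β : Ordinal.{u}} (h : a < k β) :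
    ∃ x < β, k x = a := by
  obtain ⟨γ, hγ⟩ := hk (succ β)
  have hβ : k β ∈ Iio γ := hγ ▸ mem_image_of_mem k (lt_succ β)
  obtain ⟨x, hx, rfl⟩ : a ∈ k '' Iio (succ β) := hγ ▸ h.trans hβ
  exact ⟨x, (lt_succ_iff.1 hx).lt_of_ne (by rintro rfl; exact h.false), rfl⟩

theorem isInitialFun_of_leftInverse (hks : Function.LeftInverse k s)
    (h : ∀ x y, y ≤ k x → s y ≤ x) : IsInitialFun k := by
  intro β
  have hlower : IsLowerSet (k '' Iio β) := by
    rintro _ y hy ⟨x, hx, rfl⟩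
    exact ⟨s y, (h x y hy).trans_lt hx, hks y⟩
  rcases hlower.eq_univ_or_Iio with huniv | hIio
  · exact absurd (huniv ▸ bddAbove_of_small : BddAbove (univ : Set Ordinal.{u}))
      not_bddAbove_univ
  · exact hIio

end Initial

def commonFixedPointsBelow (T : Ordinal.{v} → Ordinal.{u} → Ordinal.{u}) (κ : Ordinal.{v}) :
    Set Ordinal.{u} :=
  {x | ∀ η < κ, T η x = x}

section CommonFixedPoints

variable {T T' : Ordinal.{v} → Ordinal.{u} → Ordinal.{u}} {κ : Ordinal.{v}}

theorem commonFixedPointsBelow_subset (hT : ∀ η < κ, StrictMono (T η))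
    (hle : ∀ η < κ, T η ≤ T' η) : commonFixedPointsBelow T' κ ⊆ commonFixedPointsBelow T κ :=
  fun x hx η hη ↦ le_antisymm ((hle η hη x).trans_eq (hx η hη)) (hT η hη).le_apply

theorem isNormal_enumOrd_commonFixedPointsBelow (hT : ∀ η < κ, IsNormal (T η))
    (hunb : ¬ BddAbove (commonFixedPointsBelow T κ)) :
    IsNormal (enumOrd (commonFixedPointsBelow T κ)) := by
  refine isNormal_enumOrd (fun t ht hne hbdd η hη ↦ ?_) hunb
  rw [(hT η hη).map_sSup hne hbdd]
  exact congrArg sSup ((image_congr fun x hx ↦ ht hx η hη).trans (image_id t))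

end CommonFixedPoints

section WeakHyperation

variable {f : Ordinal.{u} → Ordinal.{u}} {F : Ordinal.{v} → Ordinal.{u} → Ordinal.{u}}

theorem IsWeakHyperation.apply_add (hF : IsWeakHyperation f F) (ξ ζ : Ordinal.{v})
    (x : Ordinal.{u}) : F (ξ + ζ) x = F ξ (F ζ x) :=
  congrFun (hF.2.2.2 ξ ζ) x

theorem IsWeakHyperation.isNormal (hF : IsWeakHyperation f F) : IsNormal f :=
  hF.2.2.1 ▸ hF.1 1

theorem IsWeakHyperation.range_subset_commonFixedPointsBelow (hF : IsWeakHyperation f F)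
    (c : Ordinal.{v}) : range (F (ω ^ c)) ⊆ commonFixedPointsBelow F (ω ^ c) := by
  rintro _ ⟨x, rfl⟩ η hη
  rw [← hF.apply_add, add_omega0_opow hη]

end WeakHyperation

noncomputable def canonicalHyperation (f : Ordinal.{u} → Ordinal.{u}) (ξ : Ordinal.{v}) :
    Ordinal.{u} → Ordinal.{u} :=
  if ξ = 0 then id
  else
    (if log ω ξ = 0 then f
      else enumOrd {x | ∀ η < ω ^ log ω ξ, canonicalHyperation f η x = x}) ∘
    canonicalHyperation f (ξ - ω ^ log ω ξ)
termination_by ξ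
decreasing_by
  · exact ‹η < _›.trans_le (opow_log_le_self ω ‹_›)
  · exact sub_omega0_opow_log_lt ‹_›

section CanonicalHyperation

variable {f : Ordinal.{u} → Ordinal.{u}} {F : Ordinal.{v} → Ordinal.{u} → Ordinal.{u}}

theorem canonicalHyperation_zero (f : Ordinal.{u} → Ordinal.{u}) :
    canonicalHyperation.{u, v} f 0 = id := by
  rw [canonicalHyperation, if_pos rfl]

theorem canonicalHyperation_omega0_opow (f : Ordinal.{u} → Ordinal.{u}) (c : Ordinal.{v}) :
    canonicalHyperation f (ω ^ c) =
      if c = 0 then f else enumOrd (commonFixedPointsBelow (canonicalHyperation f) (ω ^ c)) := by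
  rw [canonicalHyperation, if_neg (opow_ne_zero _ omega0_ne_zero), log_opow one_lt_omega0,
    Ordinal.sub_self, canonicalHyperation_zero]
  rfl

theorem canonicalHyperation_one (f : Ordinal.{u} → Ordinal.{u}) :
    canonicalHyperation.{u, v} f 1 = f := by
  simpa using canonicalHyperation_omega0_opow.{u, v} f 0

theorem canonicalHyperation_of_ne_zero {ξ : Ordinal.{v}} (hξ : ξ ≠ 0) :
    canonicalHyperation f ξ =
      canonicalHyperation f (ω ^ log ω ξ) ∘ canonicalHyperation f (ξ - ω ^ log ω ξ) := by
  rw [canonicalHyperation_omega0_opow, canonicalHyperation, if_neg hξ]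
  rfl

theorem range_subset_commonFixedPointsBelow_canonicalHyperation (hF : IsWeakHyperation f F)
    {c : Ordinal.{v}}
    (hbelow : ∀ η < ω ^ c, IsNormal (canonicalHyperation f η) ∧ canonicalHyperation f η ≤ F η) :
    range (F (ω ^ c)) ⊆ commonFixedPointsBelow (canonicalHyperation f) (ω ^ c) :=
  (hF.range_subset_commonFixedPointsBelow c).trans <| commonFixedPointsBelow_subset
    (fun η hη ↦ (hbelow η hη).1.strictMono) (fun η hη ↦ (hbelow η hη).2)

theorem not_bddAbove_commonFixedPointsBelow_canonicalHyperation (hF : IsWeakHyperation f F)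
    {c : Ordinal.{v}}
    (hbelow : ∀ η < ω ^ c, IsNormal (canonicalHyperation f η) ∧ canonicalHyperation f η ≤ F η) :
    ¬ BddAbove (commonFixedPointsBelow (canonicalHyperation f) (ω ^ c)) := fun h ↦
  (hF.1 _).strictMono.not_bddAbove_range_of_wellFoundedLT
    (h.mono (range_subset_commonFixedPointsBelow_canonicalHyperation hF hbelow))

theorem isNormal_canonicalHyperation_omega0_opow_and_le (hF : IsWeakHyperation f F)
    {c : Ordinal.{v}}
    (hbelow : ∀ η < ω ^ c, IsNormal (canonicalHyperation f η) ∧ canonicalHyperation f η ≤ F η) :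
    IsNormal (canonicalHyperation f (ω ^ c)) ∧ canonicalHyperation f (ω ^ c) ≤ F (ω ^ c) := by
  rw [canonicalHyperation_omega0_opow]
  split_ifs with hc
  · rw [hc, opow_zero, hF.2.2.1]
    exact ⟨hF.isNormal, le_rfl⟩
  · have hunb := not_bddAbove_commonFixedPointsBelow_canonicalHyperation hF hbelow
    refine ⟨isNormal_enumOrd_commonFixedPointsBelow (fun η hη ↦ (hbelow η hη).1) hunb, ?_⟩
    have hF' : StrictMono (F (ω ^ c)) := (hF.1 _).strictMono
    calc _ ≤ enumOrd (range (F (ω ^ c))) :=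
          enumOrd_le_of_subset hF'.not_bddAbove_range_of_wellFoundedLT
            (range_subset_commonFixedPointsBelow_canonicalHyperation hF hbelow)
      _ = F (ω ^ c) := enumOrd_range hF'

theorem isNormal_canonicalHyperation_and_le (hF : IsWeakHyperation f F) (ξ : Ordinal.{v}) :
    IsNormal (canonicalHyperation f ξ) ∧ canonicalHyperation f ξ ≤ F ξ := by
  induction ξ using WellFoundedLT.induction with | _ ξ ih
  rcases eq_or_ne ξ 0 with rfl | hξ
  · rw [canonicalHyperation_zero, hF.2.1]
    exact ⟨IsNormal.id, le_rfl⟩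
  obtain ⟨hlead, hlead_le⟩ := isNormal_canonicalHyperation_omega0_opow_and_le hF
    fun η hη ↦ ih η (hη.trans_le (opow_log_le_self ω hξ))
  obtain ⟨hrest, hrest_le⟩ := ih _ (sub_omega0_opow_log_lt hξ)
  rw [canonicalHyperation_of_ne_zero hξ]
  refine ⟨hlead.comp hrest, fun x ↦ ?_⟩
  calc _ ≤ canonicalHyperation f (ω ^ log ω ξ) (F (ξ - ω ^ log ω ξ) x) :=
        hlead.monotone (hrest_le x)
    _ ≤ F (ω ^ log ω ξ) (F (ξ - ω ^ log ω ξ) x) := hlead_le _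
    _ = F ξ x := by rw [← hF.apply_add, omega0_opow_log_add_sub hξ]

theorem canonicalHyperation_apply_of_lt (hF : IsWeakHyperation f F) {ζ η : Ordinal.{v}}
    (hζ : ζ ≠ 0) (hη : η < ω ^ log ω ζ) (x : Ordinal.{u}) :
    canonicalHyperation f η (canonicalHyperation f ζ x) = canonicalHyperation f ζ x := by
  rw [canonicalHyperation_of_ne_zero hζ, Function.comp_apply, canonicalHyperation_omega0_opow]
  split_ifs with hc
  · rw [hc, opow_zero, lt_one_iff] at hη
    rw [hη, canonicalHyperation_zero, id]
  · exact enumOrd_mem (not_bddAbove_commonFixedPointsBelow_canonicalHyperation hF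
      fun η _ ↦ isNormal_canonicalHyperation_and_le hF η) _ η hη

theorem isWeakHyperation_canonicalHyperation (hF : IsWeakHyperation f F) :
    IsWeakHyperation f (canonicalHyperation.{u, v} f) :=
  ⟨fun ξ ↦ (isNormal_canonicalHyperation_and_le hF ξ).1, canonicalHyperation_zero f,
    canonicalHyperation_one f,
    map_add_of_leadingTerm (M := Function.End Ordinal.{u}) (canonicalHyperation f)
      (canonicalHyperation_zero f) (fun _ hξ ↦ canonicalHyperation_of_ne_zero hξ)
      fun _ hζ _ _ hη ↦ funext (canonicalHyperation_apply_of_lt hF hζ hη)⟩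

theorem IsHyperation.eq_canonicalHyperation (hF : IsHyperation f F) :
    F = canonicalHyperation f :=
  funext fun ξ ↦ funext fun x ↦ le_antisymm
    (hF.2 _ (isWeakHyperation_canonicalHyperation hF.1) ξ x)
    ((isNormal_canonicalHyperation_and_le hF.1 ξ).2 x)

theorem IsHyperation.range_omega0_opow (hF : IsHyperation f F) {c : Ordinal.{v}} (hc : c ≠ 0) :
    range (F (ω ^ c)) = commonFixedPointsBelow F (ω ^ c) := by
  rw [hF.eq_canonicalHyperation, canonicalHyperation_omega0_opow, if_neg hc,
    range_enumOrd (not_bddAbove_commonFixedPointsBelow_canonicalHyperation hF.1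
      fun η _ ↦ isNormal_canonicalHyperation_and_le hF.1 η)]

theorem IsHyperation.apply_zero (hF : IsHyperation f F) (hf : f 0 = 0) (ξ : Ordinal.{v}) :
    F ξ 0 = 0 := by
  induction ξ using WellFoundedLT.induction with | _ ξ ih
  rcases eq_or_ne ξ 0 with rfl | hξ
  · rw [hF.1.2.1, id]
  rw [← omega0_opow_log_add_sub hξ, hF.1.apply_add, ih _ (sub_omega0_opow_log_lt hξ)]
  rcases eq_or_ne (log ω ξ) 0 with hc | hc
  · rw [hc, opow_zero, hF.1.2.2.1, hf]
  · have hfix : (0 : Ordinal.{u}) ∈ commonFixedPointsBelow F (ω ^ log ω ξ) :=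
      fun η hη ↦ ih η (hη.trans_le (opow_log_le_self ω hξ))
    obtain ⟨a, ha⟩ := (hF.range_omega0_opow hc).symm ▸ hfix
    exact nonpos_iff_eq_zero.1 (((hF.1.1 _).monotone zero_le).trans_eq ha)

end CanonicalHyperation

section UpperAdjointHyperation

variable {f g : Ordinal.{u} → Ordinal.{u}} {F K : Ordinal.{v} → Ordinal.{u} → Ordinal.{u}}

theorem IsHyperation.galoisConnection (hF : IsHyperation f F) (hf : f 0 = 0) (ξ : Ordinal.{v}) :
    GaloisConnection (F ξ) (upperAdjoint (F ξ)) :=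
  gc_upperAdjoint (hF.1.1 ξ) (hF.apply_zero hf ξ)

theorem IsHyperation.upperAdjoint_add (hF : IsHyperation f F) (hf : f 0 = 0)
    (ξ ζ : Ordinal.{v}) (β : Ordinal.{u}) :
    upperAdjoint (F (ξ + ζ)) β = upperAdjoint (F ζ) (upperAdjoint (F ξ) β) :=
  (hF.galoisConnection hf _).u_unique
    ((hF.galoisConnection hf ζ).compose (hF.galoisConnection hf ξ)) (hF.1.apply_add ξ ζ)

theorem IsWeakCohyperation.apply_add (hK : IsWeakCohyperation g K) (ξ ζ : Ordinal.{v})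
    (x : Ordinal.{u}) : K (ξ + ζ) x = K ζ (K ξ x) :=
  congrFun (hK.2.2.2 ξ ζ) x

theorem IsWeakCohyperation.le_upperAdjoint_omega0_opow (hK : IsWeakCohyperation g K)
    (hF : IsHyperation f F) (hf : f 0 = 0) {c : Ordinal.{v}} (hc : c ≠ 0)
    (hbelow : ∀ η < ω ^ c, ∀ β, K η β ≤ upperAdjoint (F η) β) (β : Ordinal.{u}) :
    K (ω ^ c) β ≤ upperAdjoint (F (ω ^ c)) β := by
  induction β using WellFoundedLT.induction with | _ β ihβ
  by_cases hfix : β ∈ commonFixedPointsBelow F (ω ^ c)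
  · obtain ⟨a, rfl⟩ := (hF.range_omega0_opow hc).symm ▸ hfix
    rw [upperAdjoint_apply (hF.1.1 _).strictMono (hF.galoisConnection hf _)]
    by_contra! ha
    obtain ⟨x, hx, rfl⟩ := (hK.1 _).exists_lt_apply_eq ha
    exact ((ihβ x hx).trans_lt ((hF.galoisConnection hf _).lt_iff_lt.1 hx)).false
  · obtain ⟨η, hη, hne⟩ : ∃ η < ω ^ c, F η β ≠ β := by
      simpa [commonFixedPointsBelow] using hfix
    have hlt : K η β < β := (hbelow η hη β).trans_lt
      ((hF.galoisConnection hf η).lt_iff_lt.1 ((hF.1.1 η).strictMono.le_apply.lt_of_ne' hne))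
    calc K (ω ^ c) β = K (ω ^ c) (K η β) := by rw [← hK.apply_add, add_omega0_opow hη]
      _ ≤ upperAdjoint (F (ω ^ c)) (K η β) := ihβ _ hlt
      _ ≤ upperAdjoint (F (ω ^ c)) β := (hF.galoisConnection hf _).monotone_u hlt.le

theorem IsWeakCohyperation.le_upperAdjoint (hK : IsWeakCohyperation g K) (hF : IsHyperation f F)
    (hadj : IsLeftAdjoint g f) (ξ : Ordinal.{v}) (β : Ordinal.{u}) :
    K ξ β ≤ upperAdjoint (F ξ) β := by
  have hf := hadj.right_map_zero
  induction ξ using WellFoundedLT.induction generalizing β with | _ ξ ih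
  rcases eq_or_ne ξ 0 with rfl | hξ
  · rw [hK.2.1]
    exact (hF.galoisConnection hf 0).le_u (by rw [hF.1.2.1]; rfl)
  rcases (opow_log_le_self ω hξ).lt_or_eq with hlead | hlead
  · rw [← omega0_opow_log_add_sub hξ, hK.apply_add, hF.upperAdjoint_add hf]
    exact (ih _ (sub_omega0_opow_log_lt hξ) _).trans
      ((hF.galoisConnection hf _).monotone_u (ih _ hlead β))
  rw [← hlead]
  rcases eq_or_ne (log ω ξ) 0 with hc | hc
  · rw [hc, opow_zero, hK.2.2.1]
    exact hadj.le_of_galoisConnection (hF.1.2.2.1 ▸ hF.galoisConnection hf 1) β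
  · exact hK.le_upperAdjoint_omega0_opow hF hf hc (fun η hη ↦ ih η (hlead ▸ hη)) β

end UpperAdjointHyperation

/-- Taking the infimum of the `H η x` with `η < ω ^ c`, rather than `x` itself, is what makes
`H (ω ^ c) ∘ H η = H (ω ^ c)` hold for `η < ω ^ c`. -/
noncomputable def adjointCohyperation (g : Ordinal.{u} → Ordinal.{u})
    (F : Ordinal.{v} → Ordinal.{u} → Ordinal.{u}) (ξ : Ordinal.{v}) : Ordinal.{u} → Ordinal.{u} :=
  if ξ = 0 then id
  else
    adjointCohyperation g F (ξ - ω ^ log ω ξ) ∘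
      if log ω ξ = 0 then g
      else fun x ↦ upperAdjoint (F (ω ^ log ω ξ))
        (⨅ η : Iio (ω ^ log ω ξ), adjointCohyperation g F η x)
termination_by ξ
decreasing_by
  · exact sub_omega0_opow_log_lt ‹_›
  · exact η.2.trans_le (opow_log_le_self ω ‹_›)

section AdjointCohyperation

variable {f g : Ordinal.{u} → Ordinal.{u}} {F : Ordinal.{v} → Ordinal.{u} → Ordinal.{u}}

local notation "H" => adjointCohyperation g F

instance nonempty_Iio_omega0_opow (c : Ordinal.{v}) : Nonempty (Iio (ω ^ c)) :=
  ⟨⟨0, opow_pos c omega0_pos⟩⟩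

theorem adjointCohyperation_zero : H 0 = id := by
  rw [adjointCohyperation, if_pos rfl]

theorem adjointCohyperation_omega0_opow_eq_ite (c : Ordinal.{v}) :
    H (ω ^ c) = if c = 0 then g
      else fun x ↦ upperAdjoint (F (ω ^ c)) (⨅ η : Iio (ω ^ c), H η x) := by
  rw [adjointCohyperation, if_neg (opow_ne_zero _ omega0_ne_zero), log_opow one_lt_omega0,
    Ordinal.sub_self, adjointCohyperation_zero]
  rfl

theorem adjointCohyperation_one : H 1 = g := by
  simpa using adjointCohyperation_omega0_opow_eq_ite (g := g) (F := F) 0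

theorem adjointCohyperation_omega0_opow {c : Ordinal.{v}} (hc : c ≠ 0) (x : Ordinal.{u}) :
    H (ω ^ c) x = upperAdjoint (F (ω ^ c)) (⨅ η : Iio (ω ^ c), H η x) := by
  rw [adjointCohyperation_omega0_opow_eq_ite, if_neg hc]

theorem adjointCohyperation_of_ne_zero {ξ : Ordinal.{v}} (hξ : ξ ≠ 0) :
    H ξ = H (ξ - ω ^ log ω ξ) ∘ H (ω ^ log ω ξ) := by
  rw [adjointCohyperation_omega0_opow_eq_ite, adjointCohyperation, if_neg hξ]

theorem iInf_adjointCohyperation_le (c : Ordinal.{v}) (x : Ordinal.{u}) :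
    ⨅ η : Iio (ω ^ c), H η x ≤ x :=
  (ciInf_le (OrderBot.bddBelow _) ⟨0, opow_pos c omega0_pos⟩).trans_eq
    (congrFun adjointCohyperation_zero x)

theorem adjointCohyperation_omega0_opow_le (hF : IsHyperation f F) (hadj : IsLeftAdjoint g f)
    (c : Ordinal.{v}) (x : Ordinal.{u}) : H (ω ^ c) x ≤ x := by
  rcases eq_or_ne c 0 with rfl | hc
  · rw [opow_zero, adjointCohyperation_one]
    exact hadj.apply_le hF.1.isNormal x
  · rw [adjointCohyperation_omega0_opow hc]
    exact (upperAdjoint_le (hF.1.1 _).strictMono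
      (hF.galoisConnection hadj.right_map_zero _) _).trans (iInf_adjointCohyperation_le c x)

theorem adjointCohyperation_le (hF : IsHyperation f F) (hadj : IsLeftAdjoint g f)
    (ξ : Ordinal.{v}) (x : Ordinal.{u}) : H ξ x ≤ x := by
  induction ξ using WellFoundedLT.induction generalizing x with | _ ξ ih
  rcases eq_or_ne ξ 0 with rfl | hξ
  · rw [adjointCohyperation_zero, id]
  rw [adjointCohyperation_of_ne_zero hξ]
  exact (ih _ (sub_omega0_opow_log_lt hξ) _).trans (adjointCohyperation_omega0_opow_le hF hadj _ x)

theorem adjointCohyperation_omega0_opow_apply (hF : IsHyperation f F) (hadj : IsLeftAdjoint g f)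
    {c : Ordinal.{v}} (hbelow : ∀ η < ω ^ c, ∀ w, H η (F η w) = w) (y : Ordinal.{u}) :
    H (ω ^ c) (F (ω ^ c) y) = y := by
  rcases eq_or_ne c 0 with rfl | hc
  · rw [opow_zero, adjointCohyperation_one, hF.1.2.2.1]
    exact (hadj _ y).1 rfl
  have hfix (η : Iio (ω ^ c)) : H η (F (ω ^ c) y) = F (ω ^ c) y := by
    conv_lhs => rw [← hF.1.range_subset_commonFixedPointsBelow c ⟨y, rfl⟩ η η.2]
    exact hbelow η η.2 _
  rw [adjointCohyperation_omega0_opow hc, iInf_congr hfix, ciInf_const,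
    upperAdjoint_apply (hF.1.1 _).strictMono (hF.galoisConnection hadj.right_map_zero _)]

theorem leftInverse_adjointCohyperation (hF : IsHyperation f F) (hadj : IsLeftAdjoint g f)
    (ξ : Ordinal.{v}) : Function.LeftInverse (H ξ) (F ξ) := by
  intro w
  induction ξ using WellFoundedLT.induction generalizing w with | _ ξ ih
  rcases eq_or_ne ξ 0 with rfl | hξ
  · rw [adjointCohyperation_zero, hF.1.2.1, id, id]
  have hsplit : F ξ w = F (ω ^ log ω ξ) (F (ξ - ω ^ log ω ξ) w) := by
    rw [← hF.1.apply_add, omega0_opow_log_add_sub hξ]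
  rw [adjointCohyperation_of_ne_zero hξ, Function.comp_apply, hsplit,
    adjointCohyperation_omega0_opow_apply hF hadj
      fun η hη ↦ ih η (hη.trans_le (opow_log_le_self ω hξ)),
    ih _ (sub_omega0_opow_log_lt hξ)]

theorem adjointCohyperation_apply_of_lt (hF : IsHyperation f F) (hadj : IsLeftAdjoint g f)
    {ζ η : Ordinal.{v}} (hadd : ∀ ξ μ, μ < ζ → ∀ x, H (ξ + μ) x = H μ (H ξ x)) (hζ : ζ ≠ 0)
    (hη : η < ω ^ log ω ζ) (x : Ordinal.{u}) : H ζ (H η x) = H ζ x := by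
  rw [adjointCohyperation_of_ne_zero hζ, Function.comp_apply, Function.comp_apply]
  congr 1
  rcases eq_or_ne (log ω ζ) 0 with hc | hc
  · rw [hc, opow_zero, lt_one_iff] at hη
    rw [hη, adjointCohyperation_zero, id]
  have hlt (μ : Iio (ω ^ log ω ζ)) : (μ : Ordinal.{v}) < ζ :=
    μ.2.trans_le (opow_log_le_self ω hζ)
  have hsum (μ : Iio (ω ^ log ω ζ)) : η + μ < ω ^ log ω ζ :=
    isPrincipal_add_omega0_opow _ hη μ.2
  rw [adjointCohyperation_omega0_opow hc, adjointCohyperation_omega0_opow hc]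
  congr 1
  refine le_antisymm (le_ciInf fun μ ↦ ?_) (le_ciInf fun μ ↦ ?_)
  · have hμ : μ + ((η + μ) - μ) = η + μ := Ordinal.add_sub_cancel_of_le le_add_self
    calc ⨅ μ : Iio (ω ^ log ω ζ), H μ (H η x)
        ≤ H μ (H η x) := ciInf_le (OrderBot.bddBelow _) μ
      _ = H ((η + μ) - μ) (H μ x) := by
          rw [← hadd _ _ (hlt μ), ← hadd _ _ ((sub_le_self _ _).trans_lt (hsum μ |>.trans_le
            (opow_log_le_self ω hζ))), hμ]
      _ ≤ H μ x := adjointCohyperation_le hF hadj _ _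
  · exact (ciInf_le (OrderBot.bddBelow _) ⟨η + μ, hsum μ⟩).trans_eq (hadd _ _ (hlt μ) x)

theorem isInitialFun_adjointCohyperation (hF : IsHyperation f F) (hadj : IsLeftAdjoint g f)
    (hg : IsInitialFun g) (ξ : Ordinal.{v}) : IsInitialFun (H ξ) := by
  induction ξ using WellFoundedLT.induction with | _ ξ ih
  rcases eq_or_ne ξ 0 with rfl | hξ
  · rw [adjointCohyperation_zero]
    exact fun β ↦ ⟨β, image_id _⟩
  rw [adjointCohyperation_of_ne_zero hξ]
  refine (ih _ (sub_omega0_opow_log_lt hξ)).comp ?_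
  rcases eq_or_ne (log ω ξ) 0 with hc | hc
  · rwa [hc, opow_zero, adjointCohyperation_one]
  refine isInitialFun_of_leftInverse (leftInverse_adjointCohyperation hF hadj _) fun x y hy ↦ ?_
  rw [adjointCohyperation_omega0_opow hc,
    ← (hF.galoisConnection hadj.right_map_zero _).le_iff_le] at hy
  exact hy.trans (iInf_adjointCohyperation_le _ x)

theorem isWeakCohyperation_adjointCohyperation (hF : IsHyperation f F)
    (hadj : IsLeftAdjoint g f) (hg : IsInitialFun g) : IsWeakCohyperation g H := by
  have hadd := map_add_of_leadingTerm (M := (Function.End Ordinal.{u})ᵐᵒᵖ) (fun ξ ↦ .op (H ξ))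
    (congrArg _ adjointCohyperation_zero)
    (fun ξ hξ ↦ congrArg _ (adjointCohyperation_of_ne_zero hξ))
    (fun ζ hζ hbelow η hη ↦ congrArg MulOpposite.op (funext fun x ↦
      adjointCohyperation_apply_of_lt hF hadj
        (fun ξ μ hμ x ↦ congrFun (congrArg MulOpposite.unop (hbelow ξ μ hμ)) x) hζ hη x))
  exact ⟨isInitialFun_adjointCohyperation hF hadj hg, adjointCohyperation_zero,
    adjointCohyperation_one, fun ξ ζ ↦ congrArg MulOpposite.unop (hadd ξ ζ)⟩

end AdjointCohyperation

theorem IsCohyperation.leftInverse {f g : Ordinal.{u} → Ordinal.{u}}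
    {F G : Ordinal.{v} → Ordinal.{u} → Ordinal.{u}} (hadj : IsLeftAdjoint g f)
    (hF : IsHyperation f F) (hG : IsCohyperation g G) (ξ : Ordinal.{v}) :
    Function.LeftInverse (G ξ) (F ξ) := by
  intro w
  have hg : IsInitialFun g := hG.1.2.2.1 ▸ hG.1.1 1
  apply le_antisymm
  · calc G ξ (F ξ w) ≤ upperAdjoint (F ξ) (F ξ w) := hG.1.le_upperAdjoint hF hadj ξ _
      _ = w :=
          upperAdjoint_apply (hF.1.1 ξ).strictMono (hF.galoisConnection hadj.right_map_zero ξ) w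
  · calc w = adjointCohyperation g F ξ (F ξ w) :=
          (leftInverse_adjointCohyperation hF hadj ξ w).symm
      _ ≤ G ξ (F ξ w) := hG.2 _ (isWeakCohyperation_adjointCohyperation hF hadj hg) ξ _

theorem stmt15_general (f g : Ordinal → Ordinal)
    (hadj : IsLeftAdjoint g f)
    (F G : Ordinal → Ordinal → Ordinal)
    (hF : IsHyperation f F) (hG : IsCohyperation g G)
    (ξ ζ α : Ordinal) (hξζ : ξ < ζ) :
    G ξ (F ζ α) = F (ζ - ξ) α ∧ G ζ (F ξ α) = G (ζ - ξ) α := by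
  have hsplit : ξ + (ζ - ξ) = ζ := Ordinal.add_sub_cancel_of_le hξζ.le
  constructor
  · rw [← hsplit, hF.1.apply_add, hG.leftInverse hadj hF, hsplit]
  · rw [← hsplit, hG.1.apply_add, hG.leftInverse hadj hF, hsplit]

/-- Let `f` be normal with left adjoint `g`, let `F` be the hyperation of `f` and
`G` the cohyperation of `g`. Then for `ξ < ζ` and any `α`:
`G ξ (F ζ α) = F (−ξ + ζ) α` and `G ζ (F ξ α) = G (−ξ + ζ) α`. -/
theorem stmt15 (f g : Ordinal → Ordinal) (hf : Order.IsNormal f)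
    (hadj : IsLeftAdjoint g f)
    (F G : Ordinal → Ordinal → Ordinal)
    (hF : IsHyperation f F) (hG : IsCohyperation g G)
    (ξ ζ α : Ordinal) (hξζ : ξ < ζ) :
    G ξ (F ζ α) = F (ζ - ξ) α ∧ G ζ (F ξ α) = G (ζ - ξ) α :=
  stmt15_general f g hadj F G hF hG ξ ζ α hξζ
end
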